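/- The assignment τ₂(t) = (-t^{-1}u - 3 - t - u)/2 and τ₂(u) = (-t^{-1}u + t + 1 + u)/2 extends to a well-defined ℂ-algebra automorphism τ₂ of R of order 3, and together with the automorphism ψ determined by ψ(t) = (-t^{-1}u - 3 - t - u)/2, ψ(u) = (t^{-1}u - 1 - t - u)/2 it satisfies the dihedral relation ψ ∘ τ₂ ∘ ψ = τ₂^{-1}. -/

import Mathlib

noncomputable section

set_option synthInstance.maxHeartbeats 1000000
set_option maxHeartbeats 1000000

open Polynomial

/-- The polynomial `u² - (t² + 4t)` over the Laurent polynomial ring `ℂ[t,t⁻¹]`. -/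
def threePoly : Polynomial (LaurentPolynomial ℂ) :=
  Polynomial.X ^ 2 - Polynomial.C (LaurentPolynomial.T 2 + 4 * LaurentPolynomial.T 1)

/-- The three-point ring `R = ℂ[t, t⁻¹, u | u² = t² + 4t]`, i.e. the quotient of
`ℂ[t,t⁻¹][u]` by the ideal generated by `u² - t² - 4t`. -/
abbrev R3 : Type := AdjoinRoot threePoly

/-- `t^k` in `R3`, for `k : ℤ`. -/
def tp (k : ℤ) : R3 := AdjoinRoot.of threePoly (LaurentPolynomial.T k)

/-- the element `t` of `R`. -/
def tR : R3 := tp 1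

/-- the element `t⁻¹` of `R`. -/
def tInv : R3 := tp (-1)

/-- the element `u` of `R`. -/
def uR : R3 := AdjoinRoot.root threePoly

/-!
Put `x = (t + u) / 2 + 1`. Then `x⁻¹ = (t - u) / 2 + 1` and `(x - 1)⁻¹ = (t⁻¹u - 1) / 2`, while
`t = x + 1 / x - 2 = (x - 1)² / x` and `u = x - 1 / x`; so `R = ℂ[x, x⁻¹, (x - 1)⁻¹]` is the coordinate ring of
`ℙ¹ ∖ {0, 1, ∞}`, and a `ℂ`-algebra map out of `R` is the same as a unit `x` of the target for which
`x - 1` is a unit too. In this coordinate `τ₂ : x ↦ 1 / (1 - x)` and `ψ : x ↦ 1 - x` are the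
generators of the anharmonic group `S₃`, where `τ₂³ = ψ² = 1` and `ψ τ₂ ψ = τ₂⁻¹` are identities
between Möbius transformations.
-/

open LaurentPolynomial

namespace LaurentPolynomial

variable {R A : Type*} [CommSemiring R] [CommSemiring A] [Algebra R A]

theorem algHom_ext {f g : R[T;T⁻¹] →ₐ[R] A} (h : f (T 1) = g (T 1)) : f = g := by
  apply AlgHom.coe_ringHom_injective
  apply IsLocalization.ringHom_ext (Submonoid.powers (X : R[X]))
  have hpoly := Polynomial.algHom_ext (f := f.comp toLaurentAlg) (g := g.comp toLaurentAlg)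
    (by simpa using h)
  ext p
  · simpa [algebraMap_eq_toLaurent] using congr($hpoly (Polynomial.C p))
  · simpa [algebraMap_eq_toLaurent] using congr($hpoly X)

variable (R) in
def aeval (x : Aˣ) : R[T;T⁻¹] →ₐ[R] A where
  __ := eval₂ (algebraMap R A) x
  commutes' r := by simp [← C_eq_algebraMap]

@[simp]
theorem aeval_T (x : Aˣ) (n : ℤ) : aeval R x (T n) = ↑(x ^ n) := eval₂_T _ _ n

end LaurentPolynomial

theorem Units.val_sq_mul_inv_eq_of_sub_one_eq {A : Type*} [CommRing A] {x y : Aˣ}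
    (hxy : (x : A) - 1 = y) : (↑(y ^ 2 * x⁻¹) : A) = x + ↑x⁻¹ - 2 := by
  rw [Units.val_mul, Units.val_pow_eq_pow_val, ← hxy]
  linear_combination ((x : A) - 2) * x.mul_inv

namespace R3

theorem tR_mul_tInv : tR * tInv = 1 := by
  rw [tR, tInv, tp, tp, ← map_mul, ← T_add, add_neg_cancel, T_zero, map_one]

theorem uR_sq : uR ^ 2 = tR ^ 2 + 4 * tR := by
  have h : AdjoinRoot.mk threePoly (X ^ 2) =
      AdjoinRoot.mk threePoly (Polynomial.C (T 2 + 4 * T 1)) :=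
    sub_eq_zero.mp AdjoinRoot.mk_self
  rw [map_pow, AdjoinRoot.mk_X, AdjoinRoot.mk_C, show (T 2 : ℂ[T;T⁻¹]) = T 1 ^ 2 by
    rw [T_pow]; norm_num] at h
  rw [uR, h, tR, tp, map_add, map_mul, map_pow, map_ofNat]

section UniversalProperty

variable {A : Type*} [CommRing A] [Algebra ℂ A]

theorem algHom_ext {f g : R3 →ₐ[ℂ] A} (ht : f tR = g tR) (hu : f uR = g uR) : f = g :=
  AdjoinRoot.algHom_ext' (LaurentPolynomial.algHom_ext ht) hu

def lift (t : Aˣ) (u : A) (h : u ^ 2 = t ^ 2 + 4 * t) : R3 →ₐ[ℂ] A :=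
  AdjoinRoot.liftAlgHom threePoly (aeval ℂ t) u <| by simp [threePoly, h, map_ofNat]

variable (t : Aˣ) (u : A) (h : u ^ 2 = t ^ 2 + 4 * t)

theorem lift_tR : lift t u h tR = t := by simp [lift, tR, tp]

theorem lift_uR : lift t u h uR = u := by simp [lift, uR]

end UniversalProperty

def xR : R3 := (2 : ℂ)⁻¹ • (tR + uR) + 1

def xUnit : R3ˣ :=
  .mkOfMulEqOne xR ((2 : ℂ)⁻¹ • (tR - uR) + 1) <| by
    unfold xR
    linear_combination (norm := algebra) (-(4 : ℂ)⁻¹) • uR_sq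

def xSubOneUnit : R3ˣ :=
  .mkOfMulEqOne (xR - 1) ((2 : ℂ)⁻¹ • (tInv * uR - 1)) <| by
    unfold xR
    linear_combination (norm := algebra)
      ((4 : ℂ)⁻¹ • tInv) * uR_sq + ((4 : ℂ)⁻¹ • (tR + uR + 4)) * tR_mul_tInv

theorem val_xUnit : (xUnit : R3) = xR := rfl

theorem val_xUnit_inv : (↑xUnit⁻¹ : R3) = (2 : ℂ)⁻¹ • (tR - uR) + 1 := rfl

theorem val_xSubOneUnit : (xSubOneUnit : R3) = xR - 1 := rfl

theorem val_xSubOneUnit_inv : (↑xSubOneUnit⁻¹ : R3) = (2 : ℂ)⁻¹ • (tInv * uR - 1) := rfl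

theorem val_xUnit_sub_one : (xUnit : R3) - 1 = xSubOneUnit := rfl

theorem tR_eq_xR : tR = xR + ↑xUnit⁻¹ - 2 := by
  rw [val_xUnit_inv, xR]
  algebra

theorem uR_eq_xR : uR = xR - ↑xUnit⁻¹ := by
  rw [val_xUnit_inv, xR]
  algebra

section Coordinate

variable {A : Type*} [CommRing A] [Algebra ℂ A]

theorem algHom_ext_xR {f g : R3 →ₐ[ℂ] A} (h : f xR = g xR) : f = g := by
  have hunit : Units.map (f : R3 →* A) xUnit = Units.map (g : R3 →* A) xUnit := Units.ext h
  have hinv : f ↑xUnit⁻¹ = g ↑xUnit⁻¹ := by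
    simpa only [Units.coe_map_inv, MonoidHom.coe_coe]
      using congrArg (fun v => ((v⁻¹ : Aˣ) : A)) hunit
  apply algHom_ext
  · rw [tR_eq_xR, map_sub, map_sub, map_add, map_add, map_ofNat, map_ofNat, h, hinv]
  · rw [uR_eq_xR, map_sub, map_sub, h, hinv]

def liftX (x y : Aˣ) (hxy : (x : A) - 1 = y) : R3 →ₐ[ℂ] A :=
  lift (y ^ 2 * x⁻¹) (x - ↑x⁻¹) <| by
    rw [Units.val_sq_mul_inv_eq_of_sub_one_eq hxy]
    linear_combination (-4 : A) * x.mul_inv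

variable (x y : Aˣ) (hxy : (x : A) - 1 = y)

theorem liftX_tR : liftX x y hxy tR = x + ↑x⁻¹ - 2 :=
  (lift_tR ..).trans (Units.val_sq_mul_inv_eq_of_sub_one_eq hxy)

theorem liftX_uR : liftX x y hxy uR = x - ↑x⁻¹ := lift_uR ..

theorem liftX_xR : liftX x y hxy xR = x := by
  rw [xR, map_add, map_smul, map_add, liftX_tR, liftX_uR, map_one]
  algebra

theorem units_map_liftX_xUnit : Units.map (liftX x y hxy : R3 →* A) xUnit = x :=
  Units.ext (liftX_xR x y hxy)

theorem units_map_liftX_xSubOneUnit : Units.map (liftX x y hxy : R3 →* A) xSubOneUnit = y :=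
  Units.ext <| by
    rw [Units.coe_map, MonoidHom.coe_coe, val_xSubOneUnit, map_sub, map_one, liftX_xR, hxy]

theorem apply_coe_units (f : R3 →ₐ[ℂ] A) (v : R3ˣ) : f v = ↑(Units.map (f : R3 →* A) v) := rfl

end Coordinate

-- `x ↦ 1 / (1 - x)`, hence `x - 1 ↦ x / (1 - x)`
def tau : R3 →ₐ[ℂ] R3 :=
  liftX (-xSubOneUnit⁻¹) (-(xUnit * xSubOneUnit⁻¹)) <| by
    push_cast
    linear_combination xSubOneUnit.mul_inv + ↑xSubOneUnit⁻¹ * val_xUnit_sub_one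

-- `x ↦ 1 - x`, hence `x - 1 ↦ -x`
def psi : R3 →ₐ[ℂ] R3 :=
  liftX (-xSubOneUnit) (-xUnit) <| by
    push_cast
    linear_combination val_xUnit_sub_one

theorem tau_tau_tau_xR : tau (tau (tau xR)) = xR := by
  simp only [← val_xUnit, apply_coe_units, tau, Units.map_neg, map_inv, map_mul,
    units_map_liftX_xUnit, units_map_liftX_xSubOneUnit, inv_neg, neg_neg, neg_mul, mul_neg,
    mul_inv_rev, inv_inv]
  group

theorem psi_psi_xR : psi (psi xR) = xR := by
  simp only [← val_xUnit, apply_coe_units, psi, Units.map_neg, units_map_liftX_xUnit,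
    units_map_liftX_xSubOneUnit, neg_neg]

theorem psi_tau_psi_xR : psi (tau (psi xR)) = tau (tau xR) := by
  simp only [← val_xUnit, apply_coe_units, psi, tau, Units.map_neg, map_inv, map_mul,
    units_map_liftX_xUnit, units_map_liftX_xSubOneUnit, inv_neg, neg_neg, neg_mul, mul_neg,
    mul_inv_rev, inv_inv]

theorem tau_tR : tau tR = (2 : ℂ)⁻¹ • (-(tInv * uR) - 3 - tR - uR) := by
  rw [tau, liftX_tR]
  push_cast [inv_neg, inv_inv, val_xSubOneUnit, val_xSubOneUnit_inv]
  rw [xR]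
  algebra

theorem tau_uR : tau uR = (2 : ℂ)⁻¹ • (-(tInv * uR) + tR + 1 + uR) := by
  rw [tau, liftX_uR]
  push_cast [inv_neg, inv_inv, val_xSubOneUnit, val_xSubOneUnit_inv]
  rw [xR]
  algebra

theorem psi_tR : psi tR = (2 : ℂ)⁻¹ • (-(tInv * uR) - 3 - tR - uR) := by
  rw [psi, liftX_tR]
  push_cast [inv_neg, val_xSubOneUnit, val_xSubOneUnit_inv]
  rw [xR]
  algebra

theorem psi_uR : psi uR = (2 : ℂ)⁻¹ • (tInv * uR - 1 - tR - uR) := by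
  rw [psi, liftX_uR]
  push_cast [inv_neg, val_xSubOneUnit, val_xSubOneUnit_inv]
  rw [xR]
  algebra

theorem tau_xR_ne_xR : tau xR ≠ xR := by
  -- at the point `x = 2` of `ℙ¹ ∖ {0, 1, ∞}` we have `τ₂ x = -1`
  intro h
  have h2 := congrArg (liftX (Units.mk0 (2 : ℂ) two_ne_zero) 1 (by norm_num)) h
  simp only [← val_xUnit, apply_coe_units, tau, Units.map_neg, map_inv,
    units_map_liftX_xUnit, units_map_liftX_xSubOneUnit] at h2
  norm_num at h2

theorem algEquiv_ext_xR {e₁ e₂ : R3 ≃ₐ[ℂ] R3} (h : e₁ xR = e₂ xR) : e₁ = e₂ :=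
  AlgEquiv.coe_toAlgHom_injective (algHom_ext_xR h)

def tauEquiv : R3 ≃ₐ[ℂ] R3 :=
  .ofAlgHom tau (tau.comp tau) (algHom_ext_xR tau_tau_tau_xR) (algHom_ext_xR tau_tau_tau_xR)

def psiEquiv : R3 ≃ₐ[ℂ] R3 :=
  .ofAlgHom psi psi (algHom_ext_xR psi_psi_xR) (algHom_ext_xR psi_psi_xR)

theorem tauEquiv_pow_three : tauEquiv ^ 3 = 1 := by
  rw [pow_three]
  exact algEquiv_ext_xR tau_tau_tau_xR

theorem orderOf_tauEquiv : orderOf tauEquiv = 3 :=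
  orderOf_eq_prime tauEquiv_pow_three fun h => tau_xR_ne_xR (DFunLike.congr_fun h xR)

theorem tauEquiv_inv : tauEquiv⁻¹ = tauEquiv * tauEquiv :=
  inv_eq_of_mul_eq_one_right <| by rw [← pow_three, tauEquiv_pow_three]

theorem psiEquiv_mul_tauEquiv_mul_psiEquiv : psiEquiv * tauEquiv * psiEquiv = tauEquiv⁻¹ := by
  rw [tauEquiv_inv]
  exact algEquiv_ext_xR psi_tau_psi_xR

end R3

/-- The assignment `τ₂(t) = (-t⁻¹u - 3 - t - u)/2`, `τ₂(u) = (-t⁻¹u + t + 1 + u)/2` extends to a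
well-defined `ℂ`-algebra automorphism `τ₂` of `R` of order 3, and together with the automorphism
`ψ` determined by `ψ(t) = (-t⁻¹u - 3 - t - u)/2`, `ψ(u) = (t⁻¹u - 1 - t - u)/2` it satisfies the
dihedral relation `ψ ∘ τ₂ ∘ ψ = τ₂⁻¹`. -/
theorem stmt_3 :
    ∃ τ₂ ψ : R3 ≃ₐ[ℂ] R3,
      τ₂ tR = (2 : ℂ)⁻¹ • (-(tInv * uR) - 3 - tR - uR) ∧
      τ₂ uR = (2 : ℂ)⁻¹ • (-(tInv * uR) + tR + 1 + uR) ∧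
      ψ tR = (2 : ℂ)⁻¹ • (-(tInv * uR) - 3 - tR - uR) ∧
      ψ uR = (2 : ℂ)⁻¹ • (tInv * uR - 1 - tR - uR) ∧
      orderOf τ₂ = 3 ∧
      ψ * τ₂ * ψ = τ₂⁻¹ :=
  ⟨R3.tauEquiv, R3.psiEquiv, R3.tau_tR, R3.tau_uR, R3.psi_tR, R3.psi_uR, R3.orderOf_tauEquiv,
    R3.psiEquiv_mul_tauEquiv_mul_psiEquiv⟩

end
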